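/- For γ = 2√(GM) and the perturbation matrix B with (B)₁₄ = 1/M and all other entries zero, the eigenvalues of T + εB are exactly the four numbers ω₀(-1 ± √ε ∓' i√(3 - ε ± 2√ε))/2 (over the sign choices), which satisfy the expansions λ₁^±(ε) = λ₁ ± (ω₀/2)(1 - i/√3)√ε + O(ε) and λ₂^±(ε) = λ₂ ± (ω₀/2)(1 + i/√3)√ε + O(ε). -/

import Mathlib

open Polynomial Asymptotics Filter
open Topology

/-- The system matrix of the two-mass damped chain with `γ = 2√(GM)`. -/
noncomputable def Tmat (G M : ℝ) : Matrix (Fin 4) (Fin 4) ℂ :=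
  !![0, 0, 1/(M:ℂ), 0;
     0, 0, 0, 1/(M:ℂ);
     -(G:ℂ), (G:ℂ), 0, 0;
     (G:ℂ), -2*(G:ℂ), 0, -(((2 * Real.sqrt (G*M) : ℝ) : ℂ))/(M:ℂ)]

/-- The rank-one perturbation matrix `B` with `B₁₄ = 1/M`. -/
noncomputable def Bmat (M : ℝ) : Matrix (Fin 4) (Fin 4) ℂ :=
  !![0, 0, 0, 1/(M:ℂ);
     0, 0, 0, 0;
     0, 0, 0, 0;
     0, 0, 0, 0]

noncomputable def om0 (G M : ℝ) : ℂ := ((Real.sqrt (G/M) : ℝ) : ℂ)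

noncomputable def lam1 (G M : ℝ) : ℂ :=
  om0 G M * (-1 - Complex.I * ((Real.sqrt 3 : ℝ) : ℂ)) / 2

noncomputable def lam2 (G M : ℝ) : ℂ :=
  om0 G M * (-1 + Complex.I * ((Real.sqrt 3 : ℝ) : ℂ)) / 2

/-- The perturbed eigenvalue branch with inner/outer sign `s ∈ {1,-1}` and
sign `t ∈ {1,-1}` in front of the imaginary square root:
`ω₀(-1 + s√ε + t·i√(3 - ε + 2s√ε))/2`. -/
noncomputable def pertEig (G M : ℝ) (s t ε : ℂ) : ℂ :=
  om0 G M * (-1 + s * ε ^ ((1:ℂ)/2)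
    + t * Complex.I * ((3 - ε + 2 * s * ε ^ ((1:ℂ)/2)) ^ ((1:ℂ)/2))) / 2

/-- square of the principal square root -/
lemma hsq (x : ℂ) : (x ^ ((1:ℂ)/2))^2 = x := by
  rw [show (1:ℂ)/2 = ((2:ℕ):ℂ)⁻¹ by norm_num]
  exact Complex.cpow_nat_inv_pow x two_ne_zero

lemma quarticFactor (z w a bp bm J ε : ℂ) (ha : a^2 = ε)
    (hbp : bp^2 = 3 - ε + 2*1*a) (hbm : bm^2 = 3 - ε + 2*(-1)*a) (hJ : J^2 = -1) :
    z^4 + 2*w*z^3 + (3-ε)*w^2*z^2 + 2*w^3*z + w^4 =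
    (z - w * (-1 + 1*a + 1*J*bp)/2) * (z - w * (-1 + 1*a + (-1)*J*bp)/2) *
    (z - w * (-1 + (-1)*a + 1*J*bm)/2) * (z - w * (-1 + (-1)*a + (-1)*J*bm)/2) := by
  have h1 : (z - w * (-1 + 1*a + 1*J*bp)/2) * (z - w * (-1 + 1*a + (-1)*J*bp)/2)
      = z^2 + w*(1-a)*z + w^2 := by
    linear_combination (-(w^2*bp^2)/4)*hJ + (w^2/4)*hbp + (w^2/4)*ha
  have h2 : (z - w * (-1 + (-1)*a + 1*J*bm)/2) * (z - w * (-1 + (-1)*a + (-1)*J*bm)/2)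
      = z^2 + w*(1+a)*z + w^2 := by
    linear_combination (-(w^2*bm^2)/4)*hJ + (w^2/4)*hbm + (w^2/4)*ha
  calc z^4 + 2*w*z^3 + (3-ε)*w^2*z^2 + 2*w^3*z + w^4
      = (z^2 + w*(1-a)*z + w^2) * (z^2 + w*(1+a)*z + w^2) := by
        linear_combination (w^2*z^2)*ha
    _ = _ := by rw [← h1, ← h2]; ring

lemma asymAux (w s t : ℂ) (hs2 : s^2 = 1) :
    (fun ε : ℂ => w * (-1 + s * ε ^ ((1:ℂ)/2)
        + t * Complex.I * ((3 - ε + 2 * s * ε ^ ((1:ℂ)/2)) ^ ((1:ℂ)/2))) / 2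
      - (w * (-1 + t * (Complex.I * ((Real.sqrt 3 : ℝ) : ℂ))) / 2
        + s * (w / 2) * (1 + t * (Complex.I / ((Real.sqrt 3 : ℝ) : ℂ))) * ε ^ ((1:ℂ)/2)))
      =O[nhds 0] fun ε : ℂ => ε := by
  set r : ℂ := ((Real.sqrt 3 : ℝ) : ℂ) with hrdef
  have hr : r^2 = 3 := by
    have h := Real.sq_sqrt (by norm_num : (0:ℝ) ≤ 3)
    rw [hrdef]; exact_mod_cast h
  have hrne : r ≠ 0 := by
    rw [hrdef]
    exact_mod_cast (Real.sqrt_pos.mpr (by norm_num)).ne'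
  have hrinv : r⁻¹ = r/3 := by
    field_simp
    linear_combination -hr
  have h_a : Tendsto (fun ε : ℂ => ε ^ ((1:ℂ)/2)) (𝓝 0) (𝓝 0) := by
    have hcont : ContinuousAt (fun p : ℂ × ℂ => p.1 ^ p.2) (0, (1:ℂ)/2) :=
      Complex.continuousAt_cpow_zero_of_re_pos (by norm_num)
    have hp : Tendsto (fun ε : ℂ => ((ε, (1:ℂ)/2) : ℂ × ℂ)) (𝓝 0) (𝓝 (0, (1:ℂ)/2)) :=
      (continuous_id.prodMk continuous_const).tendsto 0
    have := hcont.tendsto.comp hp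
    simpa [Function.comp_def,
      Complex.zero_cpow (show ((1:ℂ)/2) ≠ 0 by norm_num)] using this
  have h_inner : Tendsto (fun ε : ℂ => 3 - ε + 2 * s * ε ^ ((1:ℂ)/2)) (𝓝 0) (𝓝 3) := by
    have := ((tendsto_const_nhds (x := (3:ℂ))).sub tendsto_id).add
      ((tendsto_const_nhds (x := 2*s)).mul h_a)
    simpa [mul_assoc] using this
  have h3r : (3:ℂ) ^ ((1:ℂ)/2) = r := by
    have h := Complex.ofReal_cpow (show (0:ℝ) ≤ 3 by norm_num) (1/2)
    rw [hrdef, Real.sqrt_eq_rpow, h]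
    norm_num
  have h_b : Tendsto (fun ε : ℂ => (3 - ε + 2 * s * ε ^ ((1:ℂ)/2)) ^ ((1:ℂ)/2))
      (𝓝 0) (𝓝 r) := by
    have hc2 : ContinuousAt (fun z : ℂ => z ^ ((1:ℂ)/2)) 3 :=
      continuousAt_cpow_const (by simp [Complex.mem_slitPlane_iff])
    have := hc2.tendsto.comp h_inner
    rw [h3r] at this
    exact this
  have h_c : Tendsto (fun ε : ℂ => r + s * ε ^ ((1:ℂ)/2) * r / 3) (𝓝 0) (𝓝 r) := by
    have := (tendsto_const_nhds (x := r)).add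
      ((((tendsto_const_nhds (x := s)).mul h_a).mul (tendsto_const_nhds (x := r))).div_const 3)
    simpa using this
  have h_bc : Tendsto (fun ε : ℂ =>
      (3 - ε + 2 * s * ε ^ ((1:ℂ)/2)) ^ ((1:ℂ)/2) + (r + s * ε ^ ((1:ℂ)/2) * r / 3))
      (𝓝 0) (𝓝 (r + r)) := h_b.add h_c
  have h2r : r + r ≠ 0 := by
    intro h
    apply hrne
    have h2 : (2:ℂ) * r = 0 := by linear_combination h
    simpa using h2
  have hevne : ∀ᶠ ε in 𝓝 (0:ℂ),
      (3 - ε + 2 * s * ε ^ ((1:ℂ)/2)) ^ ((1:ℂ)/2) + (r + s * ε ^ ((1:ℂ)/2) * r / 3) ≠ 0 :=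
    h_bc.eventually_ne h2r
  have hO1 : (fun ε : ℂ =>
      ((3 - ε + 2 * s * ε ^ ((1:ℂ)/2)) ^ ((1:ℂ)/2) + (r + s * ε ^ ((1:ℂ)/2) * r / 3))⁻¹)
      =O[𝓝 0] (fun _ : ℂ => (1:ℂ)) := (h_bc.inv₀ h2r).isBigO_one ℂ
  have hO : (fun ε : ℂ => (t * Complex.I * w / 2 * (-(4:ℂ)/3 * ε)) *
      ((3 - ε + 2 * s * ε ^ ((1:ℂ)/2)) ^ ((1:ℂ)/2) + (r + s * ε ^ ((1:ℂ)/2) * r / 3))⁻¹)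
      =O[𝓝 0] fun ε : ℂ => ε := by
    have hbase : (fun ε : ℂ => t * Complex.I * w / 2 * (-(4:ℂ)/3 * ε)) =O[𝓝 0]
        fun ε : ℂ => ε := by
      have h := isBigO_const_mul_self (t * Complex.I * w / 2 * (-(4:ℂ)/3))
        (fun ε : ℂ => ε) (𝓝 0)
      exact h.congr_left (fun x => by ring)
    exact (hbase.mul hO1).congr_right (fun x => by ring)
  refine hO.congr' ?_ EventuallyEq.rfl
  filter_upwards [hevne] with ε hne
  have hb2 : ((3 - ε + 2 * s * ε ^ ((1:ℂ)/2)) ^ ((1:ℂ)/2))^2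
      = 3 - ε + 2 * s * ε ^ ((1:ℂ)/2) := hsq _
  have ha2 : (ε ^ ((1:ℂ)/2))^2 = ε := hsq _
  have key : ((3 - ε + 2 * s * ε ^ ((1:ℂ)/2)) ^ ((1:ℂ)/2) - (r + s * ε ^ ((1:ℂ)/2) * r / 3)) *
      ((3 - ε + 2 * s * ε ^ ((1:ℂ)/2)) ^ ((1:ℂ)/2) + (r + s * ε ^ ((1:ℂ)/2) * r / 3))
      = -(4:ℂ)/3 * ε := by
    linear_combination hb2 - (1 + 2*s*(ε ^ ((1:ℂ)/2))/3 + ε/9)*hr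
      - ((ε ^ ((1:ℂ)/2))^2*r^2/9)*hs2 - (r^2/9)*ha2
  have h1 : (3 - ε + 2 * s * ε ^ ((1:ℂ)/2)) ^ ((1:ℂ)/2) - (r + s * ε ^ ((1:ℂ)/2) * r / 3)
      = -(4:ℂ)/3 * ε *
        ((3 - ε + 2 * s * ε ^ ((1:ℂ)/2)) ^ ((1:ℂ)/2) + (r + s * ε ^ ((1:ℂ)/2) * r / 3))⁻¹ :=
    (eq_mul_inv_iff_mul_eq₀ hne).mpr key
  linear_combination (t*Complex.I*w/2)*(-h1) + (s*w*t*Complex.I*(ε ^ ((1:ℂ)/2))/2)*hrinv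

theorem stmt6 (G M : ℝ) (hG : 0 < G) (hM : 0 < M) :
    (∀ ε : ℂ, spectrum ℂ (Tmat G M + ε • Bmat M) =
      {z : ℂ | ∃ s ∈ ({1, -1} : Set ℂ), ∃ t ∈ ({1, -1} : Set ℂ),
        z = pertEig G M s t ε}) ∧
    (∀ s ∈ ({1, -1} : Set ℂ),
      (fun ε : ℂ => pertEig G M s (-1) ε -
          (lam1 G M + s * (om0 G M / 2) * (1 - Complex.I / ((Real.sqrt 3 : ℝ) : ℂ))
            * ε ^ ((1:ℂ)/2)))
        =O[nhds 0] fun ε : ℂ => ε) ∧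
    (∀ s ∈ ({1, -1} : Set ℂ),
      (fun ε : ℂ => pertEig G M s 1 ε -
          (lam2 G M + s * (om0 G M / 2) * (1 + Complex.I / ((Real.sqrt 3 : ℝ) : ℂ))
            * ε ^ ((1:ℂ)/2)))
        =O[nhds 0] fun ε : ℂ => ε) := by
  have hm : (M:ℂ) ≠ 0 := by exact_mod_cast hM.ne'
  set w : ℂ := om0 G M with hwdef
  have hw2 : w^2 = (G:ℂ)/(M:ℂ) := by
    have h := Real.sq_sqrt (le_of_lt (div_pos hG hM))
    calc w^2 = ((Real.sqrt (G/M)^2 : ℝ) : ℂ) := by rw [hwdef, om0]; push_cast; ring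
      _ = (((G/M : ℝ)) : ℂ) := by rw [h]
      _ = (G:ℂ)/(M:ℂ) := by push_cast; ring
  have hG2 : (G:ℂ) = (M:ℂ) * w^2 := by rw [hw2]; field_simp
  have hγ : ((Real.sqrt (G*M) : ℝ) : ℂ) = (M:ℂ) * w := by
    have h1 : Real.sqrt (G*M) = M * Real.sqrt (G/M) := by
      have h2 : G*M = (M * Real.sqrt (G/M))^2 := by
        have h := Real.sq_sqrt (le_of_lt (div_pos hG hM))
        rw [mul_pow, h]
        field_simp
      rw [h2, Real.sqrt_sq (by positivity)]
    rw [h1, hwdef, om0]; push_cast; ring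
  refine ⟨?_, ?_, ?_⟩
  · intro ε
    have ha2 := hsq ε
    have hbp := hsq (3 - ε + 2 * 1 * ε ^ ((1:ℂ)/2))
    have hbm := hsq (3 - ε + 2 * (-1) * ε ^ ((1:ℂ)/2))
    have hdet : ∀ z : ℂ,
        (algebraMap ℂ (Matrix (Fin 4) (Fin 4) ℂ) z - (Tmat G M + ε • Bmat M)).det
        = (z - pertEig G M 1 1 ε) * (z - pertEig G M 1 (-1) ε) *
          (z - pertEig G M (-1) 1 ε) * (z - pertEig G M (-1) (-1) ε) := by
      intro z
      have hrepr : algebraMap ℂ (Matrix (Fin 4) (Fin 4) ℂ) z - (Tmat G M + ε • Bmat M) =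
          !![z, 0, -(1/(M:ℂ)), -(ε/(M:ℂ));
             0, z, 0, -(1/(M:ℂ));
             (M:ℂ)*w^2, -((M:ℂ)*w^2), z, 0;
             -((M:ℂ)*w^2), 2*((M:ℂ)*w^2), 0, z + 2*((M:ℂ)*w)/(M:ℂ)] := by
        ext i j
        fin_cases i <;> fin_cases j <;>
          simp [Tmat, Bmat, Matrix.algebraMap_eq_diagonal, Matrix.vecHead, Matrix.vecTail,
            Complex.ofReal_mul, Complex.ofReal_ofNat, hG2, hγ] <;> ring
      have hq : (algebraMap ℂ (Matrix (Fin 4) (Fin 4) ℂ) z - (Tmat G M + ε • Bmat M)).det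
          = z^4 + 2*w*z^3 + (3-ε)*w^2*z^2 + 2*w^3*z + w^4 := by
        rw [hrepr]
        simp [Matrix.det_succ_row_zero, Fin.sum_univ_succ, Fin.succAbove]
        linear_combination (2*w*z^3 + (3-ε)*w^2*z^2 + ((M:ℂ)*(M:ℂ)⁻¹+1)*(2*z*w^3+w^4))
          * (mul_inv_cancel₀ hm)
      rw [hq]
      have := quarticFactor z w (ε ^ ((1:ℂ)/2))
        ((3 - ε + 2 * 1 * ε ^ ((1:ℂ)/2)) ^ ((1:ℂ)/2))
        ((3 - ε + 2 * (-1) * ε ^ ((1:ℂ)/2)) ^ ((1:ℂ)/2))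
        Complex.I ε ha2 hbp hbm Complex.I_sq
      rw [this]
      simp only [pertEig, ← hwdef]
    ext z
    have hiff : z ∈ spectrum ℂ (Tmat G M + ε • Bmat M) ↔
        (z - pertEig G M 1 1 ε) * (z - pertEig G M 1 (-1) ε) *
        (z - pertEig G M (-1) 1 ε) * (z - pertEig G M (-1) (-1) ε) = 0 := by
      rw [spectrum.mem_iff, Matrix.isUnit_iff_isUnit_det, isUnit_iff_ne_zero, not_not, hdet z]
    simp only [Set.mem_setOf_eq, Set.mem_insert_iff, Set.mem_singleton_iff]
    rw [hiff, mul_eq_zero, mul_eq_zero, mul_eq_zero, sub_eq_zero, sub_eq_zero,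
      sub_eq_zero, sub_eq_zero]
    constructor
    · rintro (((h|h)|h)|h)
      · exact ⟨1, Or.inl rfl, 1, Or.inl rfl, h⟩
      · exact ⟨1, Or.inl rfl, -1, Or.inr rfl, h⟩
      · exact ⟨-1, Or.inr rfl, 1, Or.inl rfl, h⟩
      · exact ⟨-1, Or.inr rfl, -1, Or.inr rfl, h⟩
    · rintro ⟨s, (rfl|rfl), t, (rfl|rfl), rfl⟩
      · exact Or.inl (Or.inl (Or.inl rfl))
      · exact Or.inl (Or.inl (Or.inr rfl))
      · exact Or.inl (Or.inr rfl)
      · exact Or.inr rfl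
  · intro s hs
    simp only [Set.mem_insert_iff, Set.mem_singleton_iff] at hs
    have hs2 : s^2 = 1 := by rcases hs with rfl|rfl <;> norm_num
    refine (asymAux (om0 G M) s (-1) hs2).congr (fun x => ?_) (fun x => rfl)
    simp only [pertEig, lam1]
    ring
  · intro s hs
    simp only [Set.mem_insert_iff, Set.mem_singleton_iff] at hs
    have hs2 : s^2 = 1 := by rcases hs with rfl|rfl <;> norm_num
    refine (asymAux (om0 G M) s 1 hs2).congr (fun x => ?_) (fun x => rfl)
    simp only [pertEig, lam2]
    ring
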